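/- For every integer n ≥ 2, T*(n) = T(n) − T(n−1) equals 1 if and only if n is prime. -/
import Mathlib

def f (l : List ℕ) : ℕ := l.foldl (fun acc a => (acc + 1) * a) 0

noncomputable def T : ℕ → ℕ
  | 0 => 1
  | n + 1 => Nat.card {l : List ℕ // l ≠ [] ∧ (∀ a ∈ l, 0 < a) ∧ f l = n + 1}

def U (n : ℕ) : Type := {l : List ℕ // (∀ a ∈ l, 0 < a) ∧ f l = n}

lemma f_concat (l : List ℕ) (a : ℕ) : f (l ++ [a]) = (f l + 1) * a := by
  simp [f]

lemma f_nil : f ([] : List ℕ) = 0 := rfl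

lemma ne_nil_of_f {l : List ℕ} {n : ℕ} (hn : n ≠ 0) (h : f l = n) : l ≠ [] := by
  rintro rfl; exact hn h.symm

/-- The concatenation map from the sigma type to `U n`. -/
def g (n : ℕ) (x : Σ d : {d // d ∈ n.divisors}, U (n / d.1 - 1)) : U n :=
  ⟨x.2.1 ++ [x.1.1], by
    obtain ⟨⟨d, hd⟩, ⟨l, hpos, hf⟩⟩ := x
    refine ⟨?_, ?_⟩
    · intro a ha
      rcases List.mem_append.1 ha with h | h
      · exact hpos a h
      · simp only [List.mem_singleton] at h
        exact h ▸ Nat.pos_of_mem_divisors hd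
    · show f (l ++ [d]) = n
      rw [f_concat, hf]
      obtain ⟨hdvd, hn0⟩ := Nat.mem_divisors.1 hd
      have h1 : 1 ≤ n / d := Nat.one_le_div_iff (Nat.pos_of_mem_divisors hd) |>.2
        (Nat.le_of_dvd (Nat.pos_of_ne_zero hn0) hdvd)
      rw [Nat.sub_add_cancel h1, Nat.div_mul_cancel hdvd]⟩

lemma g_bij (n : ℕ) (hn : n ≠ 0) : Function.Bijective (g n) := by
  constructor
  · rintro ⟨⟨d1, hd1⟩, ⟨l1, h1⟩⟩ ⟨⟨d2, hd2⟩, ⟨l2, h2⟩⟩ h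
    have h' : l1 ++ [d1] = l2 ++ [d2] := congrArg Subtype.val h
    obtain ⟨hl, hd⟩ := List.append_inj' h' rfl
    simp only [List.cons.injEq] at hd
    obtain ⟨rfl, -⟩ := hd
    subst hl
    rfl
  · rintro ⟨l, hpos, hf⟩
    have hne : l ≠ [] := ne_nil_of_f hn hf
    have hcat : l.dropLast ++ [l.getLast hne] = l := List.dropLast_append_getLast hne
    set a := l.getLast hne with ha
    have hfa : (f l.dropLast + 1) * a = n := by rw [← f_concat, hcat]; exact hf
    have hapos : 0 < a := hpos a (List.getLast_mem hne)
    have hdvd : a ∣ n := ⟨f l.dropLast + 1, by rw [← hfa]; ring⟩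
    have hdiv : n / a = f l.dropLast + 1 := by
      rw [← hfa, Nat.mul_div_cancel _ hapos]
    refine ⟨⟨⟨a, Nat.mem_divisors.2 ⟨hdvd, hn⟩⟩, ⟨l.dropLast, ?_, ?_⟩⟩, ?_⟩
    · intro b hb
      exact hpos b (List.dropLast_sublist l |>.mem hb)
    · simp [hdiv]
    · exact Subtype.ext hcat

lemma U_subsingleton : Subsingleton (U 0) := by
  constructor
  rintro ⟨l1, h1, hf1⟩ ⟨l2, h2, hf2⟩
  have key : ∀ l : List ℕ, (∀ a ∈ l, 0 < a) → f l = 0 → l = [] := by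
    intro l hpos hf
    rcases List.eq_nil_or_concat l with rfl | ⟨L, b, rfl⟩
    · rfl
    · rw [List.concat_eq_append, f_concat] at hf
      have hb : 0 < b := hpos b (by simp)
      exact absurd hf (Nat.mul_ne_zero (Nat.succ_ne_zero _) hb.ne')
  exact Subtype.ext ((key l1 h1 hf1).trans (key l2 h2 hf2).symm)

lemma U_finite : ∀ n, Finite (U n) := by
  intro n
  induction n using Nat.strong_induction_on with
  | _ n ih =>
    match n, ih with
    | 0, _ => have := U_subsingleton; exact Finite.of_subsingleton
    | (m + 1), ih =>
      have : ∀ d : {d // d ∈ (m + 1).divisors}, Finite (U ((m + 1) / d.1 - 1)) := by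
        rintro ⟨d, hd⟩
        have hdpos := Nat.pos_of_mem_divisors hd
        have : (m + 1) / d - 1 < m + 1 := by
          have := Nat.div_le_self (m + 1) d
          omega
        exact ih _ this
      exact Finite.of_surjective (g (m + 1)) (g_bij (m + 1) (by omega)).2

instance (n : ℕ) : Finite (U n) := U_finite n

lemma U_nonempty (n : ℕ) : Nonempty (U n) := by
  rcases n with _ | m
  · exact ⟨⟨[], by simp, rfl⟩⟩
  · exact ⟨⟨[m + 1], by simp, by simp [f]⟩⟩

lemma T_eq (n : ℕ) : T n = Nat.card (U n) := by
  rcases n with _ | m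
  · have := U_subsingleton
    have h := Nat.card_eq_one_iff_unique.2 ⟨this, U_nonempty 0⟩
    simp [T, h]
  · show Nat.card _ = Nat.card _
    apply Nat.card_congr
    apply Equiv.subtypeEquivRight
    intro l
    constructor
    · rintro ⟨-, h⟩; exact h
    · rintro ⟨h1, h2⟩; exact ⟨ne_nil_of_f (by omega) h2, h1, h2⟩

lemma T_pos (n : ℕ) : 0 < T n := by
  rw [T_eq]
  have := U_nonempty n
  exact Nat.card_pos

lemma T_rec (n : ℕ) (hn : n ≠ 0) :
    T n = ∑ d ∈ n.divisors, T (n / d - 1) := by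
  rw [T_eq, ← Nat.card_eq_of_bijective _ (g_bij n hn)]
  have : ∀ d : {d // d ∈ n.divisors}, Finite (U (n / d.1 - 1)) := fun _ => U_finite _
  have inst : ∀ d : {d // d ∈ n.divisors}, Fintype (U (n / d.1 - 1)) :=
    fun d => Fintype.ofFinite _
  rw [Nat.card_eq_fintype_card, Fintype.card_sigma]
  rw [← Finset.sum_coe_sort n.divisors (fun d => T (n / d - 1))]
  congr 1
  funext d
  rw [T_eq, Nat.card_eq_fintype_card]

theorem Tstar_eq_one_iff_prime (n : ℕ) (hn : 2 ≤ n) :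
    (T n : ℤ) - T (n - 1) = 1 ↔ n.Prime := by
  have hn0 : n ≠ 0 := by omega
  have hrec : T n = ∑ d ∈ n.divisors, T (d - 1) := by
    rw [T_rec n hn0, Nat.sum_div_divisors n (fun d => T (d - 1))]
  have hmem : n ∈ n.divisors := Nat.mem_divisors_self n hn0
  have hsplit : T n = T (n - 1) + ∑ d ∈ n.divisors.erase n, T (d - 1) := by
    rw [hrec, ← Finset.add_sum_erase _ _ hmem]
  have h1mem : 1 ∈ n.divisors.erase n := by
    simp [Nat.mem_divisors, hn0]
    omega
  have hsplit2 : ∑ d ∈ n.divisors.erase n, T (d - 1)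
      = 1 + ∑ d ∈ (n.divisors.erase n).erase 1, T (d - 1) := by
    rw [← Finset.add_sum_erase _ _ h1mem]
    simp [T]
  have key : (T n : ℤ) - T (n - 1) = 1 ↔ ∑ d ∈ (n.divisors.erase n).erase 1, T (d - 1) = 0 := by
    rw [hsplit, hsplit2]
    omega
  rw [key, Finset.sum_eq_zero_iff]
  constructor
  · intro h
    rw [Nat.prime_def]
    refine ⟨hn, fun m hm => ?_⟩
    by_contra hc
    push_neg at hc
    have hms : m ∈ (n.divisors.erase n).erase 1 := by
      simp [Nat.mem_divisors, hn0, hc.1, hc.2, hm]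
    exact (T_pos (m - 1)).ne' (h m hms)
  · intro hp d hd
    simp only [Finset.mem_erase, Nat.mem_divisors] at hd
    rcases (Nat.prime_def.1 hp).2 d hd.2.2.1 with h | h
    · exact absurd h hd.1
    · exact absurd h hd.2.1
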